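/- Let P^n = {0 = t^n_0 < t^n_1 < ⋯ < t^n_{N_n} = T}, n ∈ ℕ, be a nested sequence of partitions of [0,T] (P^n ⊆ P^{n+1}) with mesh |P^n| → 0, let F : [0,T] → ℝ^d be càdlàg with jump times J_F := {t ∈ (0,T] : F_{t−} ≠ F_t} satisfying J_F ⊆ ∪_{n∈ℕ} P^n, and define F^n_t := F_T·1_{{T}}(t) + Σ_{k=0}^{N_n−1} F_{t^n_k}·1_{[t^n_k,t^n_{k+1})}(t). Then the family {F^n : n ∈ ℕ} is equiregulated: for every t ∈ (0,T] and every ε > 0 there exists u ∈ [0,t) such that |F^n_s − F^n_{t−}| < ε for all s ∈ [u,t) and all n ∈ ℕ, and for every t ∈ [0,T) and every ε > 0 there exists v ∈ (t,T] such that |F^n_s − F^n_t| < ε for all s ∈ (t,v] and all n ∈ ℕ. -/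

import Mathlib

open Set Filter MeasureTheory
open scoped Topology InnerProductSpace BigOperators

noncomputable section

/-- `ℝ^d` with the Euclidean norm. -/
abbrev Vec (d : ℕ) := EuclideanSpace ℝ (Fin d)

/-- `ℝ^{d×d}` with the Euclidean (Frobenius) norm. -/
abbrev Mat (d : ℕ) := EuclideanSpace ℝ (Fin d × Fin d)

def mkVec {d : ℕ} (f : Fin d → ℝ) : Vec d := (WithLp.equiv 2 (Fin d → ℝ)).symm f

def mkMat {d : ℕ} (f : Fin d × Fin d → ℝ) : Mat d := (WithLp.equiv 2 (Fin d × Fin d → ℝ)).symm f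

/-- The tensor product `a ⊗ b` of two vectors, as a `d × d` matrix. -/
def tensor {d : ℕ} (a b : Vec d) : Mat d := mkMat (fun ij => a ij.1 * b ij.2)

/-- A matrix (an element of `L(ℝ^d, ℝ^d)`) applied to a vector. -/
def matApply {d : ℕ} (M : Mat d) (v : Vec d) : Vec d := mkVec (fun i => ∑ j, M (i, j) * v j)

/-- The matrix with `(i,j)` entry `Σ_k A_{ki} B_{kj}`, i.e. `AᵀB`. -/
def matTProd {d : ℕ} (A B : Mat d) : Mat d := mkMat (fun ij => ∑ k, A (k, ij.1) * B (k, ij.2))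

/-- The identity matrix. -/
def idMat {d : ℕ} : Mat d := mkMat (fun ij => if ij.1 = ij.2 then (1 : ℝ) else 0)

/-- The contraction `F' G' 𝕏 := Σ_{k,i,j} F'_{ki} G'_{kj} 𝕏_{ij}`. -/
def ddContract {d : ℕ} (A B X : Mat d) : ℝ := ∑ k, ∑ i, ∑ j, A (k, i) * B (k, j) * X (i, j)

/-- The increment process `(s,t) ↦ X_t - X_s` of a path. -/
def inc {E : Type*} [AddCommGroup E] (X : ℝ → E) : ℝ → ℝ → E := fun s t => X t - X s

/-- A (finite) partition `s = τ_0 < τ_1 < ⋯ < τ_N = t` of the interval `[s,t]`. -/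
structure IntervalPartition (s t : ℝ) where
  N : ℕ
  τ : ℕ → ℝ
  Npos : 0 < N
  first : τ 0 = s
  last : τ N = t
  mono : ∀ k < N, τ k < τ (k + 1)

/-- The mesh of the partition is `< δ`. -/
def IntervalPartition.MeshLt {s t : ℝ} (P : IntervalPartition s t) (δ : ℝ) : Prop :=
  ∀ k < P.N, P.τ (k + 1) - P.τ k < δ

/-- The sum `Σ_{[u,v] ∈ P} |A_{u,v}|^p` along a partition `P`, for a two-parameter
function `A`. -/
def varSumOn {E : Type*} [NormedAddCommGroup E] (p : ℝ) (A : ℝ → ℝ → E)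
    {s t : ℝ} (P : IntervalPartition s t) : ℝ :=
  ∑ k ∈ Finset.range P.N, ‖A (P.τ k) (P.τ (k + 1))‖ ^ p

/-- The set of all sums `Σ_{[u,v] ∈ P} |A_{u,v}|^p` over partitions `P` of `[s,t]`. -/
def pVarSums {E : Type*} [NormedAddCommGroup E] (p : ℝ) (A : ℝ → ℝ → E) (s t : ℝ) : Set ℝ :=
  {x | ∃ P : IntervalPartition s t, x = varSumOn p A P}

/-- The `p`-variation `‖A‖_{p,[s,t]} := (sup_P Σ_{[u,v] ∈ P} |A_{u,v}|^p)^{1/p}` of a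
two-parameter function `A` (for a path `X`, apply this to `inc X`). -/
def pVar {E : Type*} [NormedAddCommGroup E] (p : ℝ) (A : ℝ → ℝ → E) (s t : ℝ) : ℝ :=
  sSup (pVarSums p A s t) ^ (1 / p)

/-- `A` has finite `p`-variation on `[s,t]`. -/
def HasBddPVar {E : Type*} [NormedAddCommGroup E] (p : ℝ) (A : ℝ → ℝ → E) (s t : ℝ) : Prop :=
  BddAbove (pVarSums p A s t)

/-- `f` is càdlàg on `[a,b]`: right-continuous on `[a,b)` with left limits on `(a,b]`. -/
def CadlagOn {E : Type*} [TopologicalSpace E] (f : ℝ → E) (a b : ℝ) : Prop :=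
  (∀ t ∈ Ico a b, Tendsto f (𝓝[>] t) (𝓝 (f t))) ∧
  (∀ t ∈ Ioc a b, ∃ l, Tendsto f (𝓝[<] t) (𝓝 l))

/-- The supremum norm of `f` on `[a,b]`. -/
def supNormOn {E : Type*} [NormedAddCommGroup E] (f : ℝ → E) (a b : ℝ) : ℝ :=
  sSup ((fun u => ‖f u‖) '' Icc a b)

/-- A control function on `Δ_{[0,T]}`: nonnegative and superadditive. -/
def IsControl (T : ℝ) (w : ℝ → ℝ → ℝ) : Prop :=
  (∀ ⦃s t : ℝ⦄, 0 ≤ s → s ≤ t → t ≤ T → 0 ≤ w s t) ∧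
  (∀ ⦃s u t : ℝ⦄, 0 ≤ s → s ≤ u → u ≤ t → t ≤ T → w s u + w u t ≤ w s t)

/-- The set of jump times of `f` in `(0,T]`. -/
def jumpSet {E : Type*} [TopologicalSpace E] (f : ℝ → E) (T : ℝ) : Set ℝ :=
  {u | u ∈ Ioc (0 : ℝ) T ∧ Function.leftLim f u ≠ f u}

/-- A càdlàg `p`-rough path `(X, Z, 𝕏)` over `ℝ^d` on `[0,T]`:
`X, Z ∈ D^p([0,T];ℝ^d)`, `𝕏 ∈ D^{p/2}_2(Δ_{[0,T]};ℝ^{d×d})`, and Chen's relation holds. -/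
structure IsRoughPath (d : ℕ) (p T : ℝ) (X Z : ℝ → Vec d) (XX : ℝ → ℝ → Mat d) : Prop where
  cadlagX : CadlagOn X 0 T
  cadlagZ : CadlagOn Z 0 T
  varX : HasBddPVar p (inc X) 0 T
  varZ : HasBddPVar p (inc Z) 0 T
  cadlagXX₁ : ∀ t ∈ Icc (0 : ℝ) T, CadlagOn (fun s => XX s t) 0 t
  cadlagXX₂ : ∀ s ∈ Icc (0 : ℝ) T, CadlagOn (fun t => XX s t) s T
  varXX : HasBddPVar (p / 2) XX 0 T
  chen : ∀ ⦃s u t : ℝ⦄, 0 ≤ s → s ≤ u → u ≤ t → t ≤ T →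
    XX s t = XX s u + XX u t + tensor (Z u - Z s) (X t - X u)

/-- The remainder `R^F_{s,t} := F_{s,t} - F'_s Z_{s,t}` of a controlled path. -/
def rem {d : ℕ} (Z F : ℝ → Vec d) (F' : ℝ → Mat d) : ℝ → ℝ → Vec d :=
  fun s t => F t - F s - matApply (F' s) (Z t - Z s)

/-- `(F, F')` is a controlled path in `𝒱^{q,r}_Z` on `[0,T]` (with `F ∈ D^p`):
`F ∈ D^p([0,T];ℝ^d)`, `F' ∈ D^q([0,T];L(ℝ^d,ℝ^d))` and `R^F ∈ D^r_2(Δ_{[0,T]};ℝ^d)`. -/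
structure IsControlledPath (d : ℕ) (p q r T : ℝ) (Z : ℝ → Vec d)
    (F : ℝ → Vec d) (F' : ℝ → Mat d) : Prop where
  cadlagF : CadlagOn F 0 T
  varF : HasBddPVar p (inc F) 0 T
  cadlagF' : CadlagOn F' 0 T
  varF' : HasBddPVar q (inc F') 0 T
  cadlagR₁ : ∀ t ∈ Icc (0 : ℝ) T, CadlagOn (fun s => rem Z F F' s t) 0 t
  cadlagR₂ : ∀ s ∈ Icc (0 : ℝ) T, CadlagOn (fun t => rem Z F F' s t) s T
  varR : HasBddPVar r (rem Z F F') 0 T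

/-- The controlled path norm `‖F,F'‖_{𝒱^{q,r}_Z,[0,T]} := |F'_0| + ‖F'‖_q + ‖R^F‖_r`. -/
def ctrlNorm {d : ℕ} (q r T : ℝ) (Z F : ℝ → Vec d) (F' : ℝ → Mat d) : ℝ :=
  ‖F' 0‖ + pVar q (inc F') 0 T + pVar r (rem Z F F') 0 T

/-- Compensated Riemann sum `Σ (⟨F_u, G_{u,v}⟩ + F'_u G'_u 𝕏_{u,v})` along a partition of `[0,t]`. -/
def compSum {d : ℕ} (F : ℝ → Vec d) (F' : ℝ → Mat d) (G : ℝ → Vec d) (G' : ℝ → Mat d)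
    (XX : ℝ → ℝ → Mat d) {t : ℝ} (P : IntervalPartition 0 t) : ℝ :=
  ∑ k ∈ Finset.range P.N,
    (⟪F (P.τ k), G (P.τ (k + 1)) - G (P.τ k)⟫_ℝ
      + ddContract (F' (P.τ k)) (G' (P.τ k)) (XX (P.τ k) (P.τ (k + 1))))

/-- `I` is the value at time `t` of the rough integral `∫₀ᵗ F dG`: the compensated Riemann
sums converge to `I` along every sequence of partitions of `[0,t]` with mesh tending to `0`. -/
def IsRoughIntegralAt {d : ℕ} (F : ℝ → Vec d) (F' : ℝ → Mat d) (G : ℝ → Vec d)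
    (G' : ℝ → Mat d) (XX : ℝ → ℝ → Mat d) (t : ℝ) (I : ℝ) : Prop :=
  ∀ ε > 0, ∃ δ > 0, ∀ P : IntervalPartition 0 t, P.MeshLt δ →
    |compSum F F' G G' XX P - I| < ε

/-- The rough path seminorm `‖X‖_{p,[0,T]} + ‖Z‖_{p,[0,T]} + ‖𝕏‖_{p/2,[0,T]}`. -/
def roughNorm {d : ℕ} (p T : ℝ) (X Z : ℝ → Vec d) (XX : ℝ → ℝ → Mat d) : ℝ :=
  pVar p (inc X) 0 T + pVar p (inc Z) 0 T + pVar (p / 2) XX 0 T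

/-- The rough path distance `‖X − X̃‖_p + ‖Z − Z̃‖_p + ‖𝕏 − 𝕏̃‖_{p/2}`. -/
def roughDist {d : ℕ} (p T : ℝ) (X Z X' Z' : ℝ → Vec d) (XX XX' : ℝ → ℝ → Mat d) : ℝ :=
  pVar p (inc (fun u => X u - X' u)) 0 T + pVar p (inc (fun u => Z u - Z' u)) 0 T
    + pVar (p / 2) (fun s t => XX s t - XX' s t) 0 T

/-- A nested sequence of partitions `P^n = {0 = t^n_0 < t^n_1 < ⋯ < t^n_{N_n} = T}` of `[0,T]`
with vanishing mesh size. -/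
structure PartitionSeq (T : ℝ) where
  N : ℕ → ℕ
  t : ℕ → ℕ → ℝ
  Npos : ∀ n, 0 < N n
  first : ∀ n, t n 0 = 0
  last : ∀ n, t n (N n) = T
  mono : ∀ n, ∀ k < N n, t n k < t n (k + 1)
  nested : ∀ n, ∀ k ≤ N n, ∃ l ≤ N (n + 1), t (n + 1) l = t n k
  mesh : ∀ ε > 0, ∃ M : ℕ, ∀ n ≥ M, ∀ k < N n, t n (k + 1) - t n k < ε

/-- The set `∪_{n ∈ ℕ} P^n` of all partition points. -/
def PartitionSeq.points {T : ℝ} (π : PartitionSeq T) : Set ℝ :=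
  {x | ∃ n, ∃ k ≤ π.N n, π.t n k = x}

/-- The left-point discretization
`S^n_u = S_T 1_{{T}}(u) + Σ_k S_{t^n_k} 1_{[t^n_k, t^n_{k+1})}(u)`. -/
def PartitionSeq.disc {T : ℝ} (π : PartitionSeq T) {E : Type*} [NormedAddCommGroup E]
    (S : ℝ → E) (n : ℕ) (u : ℝ) : E :=
  Set.indicator {T} S u
    + ∑ k ∈ Finset.range (π.N n),
        Set.indicator (Ico (π.t n k) (π.t n (k + 1))) (fun _ => S (π.t n k)) u

/-- The Riemann sum `∫₀ᵘ S^n ⊗ dS := Σ_k S_{t^n_k} ⊗ (S_{t^n_{k+1} ∧ u} - S_{t^n_k ∧ u})`. -/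
def riemannSum {d : ℕ} {T : ℝ} (π : PartitionSeq T) (S : ℝ → Vec d) (n : ℕ) (u : ℝ) : Mat d :=
  ∑ k ∈ Finset.range (π.N n),
    tensor (S (π.t n k)) (S (min (π.t n (k + 1)) u) - S (min (π.t n k) u))

/-- The Riemann sum `∫_{t^n_k}^{t^n_l} S^n ⊗ dS` between two partition points. -/
def riemannBetween {d : ℕ} {T : ℝ} (π : PartitionSeq T) (S : ℝ → Vec d) (n k l : ℕ) : Mat d :=
  ∑ j ∈ Finset.Ico k l, tensor (S (π.t n j)) (S (π.t n (j + 1)) - S (π.t n j))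

/-- Property (RIE) for `S` with respect to `p` and `(P^n)`, with Riemann-sum limit `II` and
control function `w`:  `S` is càdlàg, `S^n → S` uniformly, the Riemann sums `∫₀· S^n ⊗ dS`
converge uniformly to `II`, and `w` dominates `|S_{s,t}|^p` as well as
`|∫_{t^n_k}^{t^n_l} S^n ⊗ dS - S_{t^n_k} ⊗ S_{t^n_k,t^n_l}|^{p/2}`. -/
structure SatisfiesRIE (d : ℕ) (p T : ℝ) (π : PartitionSeq T) (S : ℝ → Vec d)
    (II : ℝ → Mat d) (w : ℝ → ℝ → ℝ) : Prop where
  cadlag : CadlagOn S 0 T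
  discUnif : TendstoUniformlyOn (fun n => π.disc S n) S atTop (Icc 0 T)
  riemannUnif : TendstoUniformlyOn (fun n => riemannSum π S n) II atTop (Icc 0 T)
  control : IsControl T w
  domS : ∀ ⦃s t : ℝ⦄, 0 ≤ s → s ≤ t → t ≤ T → ‖S t - S s‖ ^ p ≤ w s t
  domA : ∀ n : ℕ, ∀ ⦃k l : ℕ⦄, k < l → l ≤ π.N n →
    ‖riemannBetween π S n k l - tensor (S (π.t n k)) (S (π.t n l) - S (π.t n k))‖ ^ (p / 2)
      ≤ w (π.t n k) (π.t n l)

/-- The canonical second-level function `A_{s,t} := ∫ₛᵗ S ⊗ dS - S_s ⊗ S_{s,t}`,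
built from the limit `II = ∫₀· S ⊗ dS` of the Riemann sums in Property (RIE). -/
def roughA {d : ℕ} (S : ℝ → Vec d) (II : ℝ → Mat d) : ℝ → ℝ → Mat d :=
  fun s t => II t - II s - tensor (S s) (S t - S s)


/-! For each fixed `n` the step function `F^n` is locally constant on both sides of every point,
which handles finitely many `n` at once. For large `n` the mesh is small, so near `t` the values of
`F^n` are values of `F` at nearby points on the correct side, and the one-sided limits of `F` take
over; on the right this also needs `F^n_t → F_t`, which is where the jump times being partition
points enters: at a continuity point `F^n_t` is a value of `F` just left of `t`, and a partition
point `t` is eventually reproduced exactly. -/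

theorem Nat.exists_lt_and_not_succ {P : ℕ → Prop} {N : ℕ} (h0 : P 0) (hN : ¬ P N) :
    ∃ k < N, P k ∧ ¬ P (k + 1) := by
  induction N with
  | zero => exact absurd h0 hN
  | succ N ih =>
    by_cases hPN : P N
    · exact ⟨N, N.lt_succ_self, hPN, hN⟩
    · obtain ⟨k, hk, hPk, hPk'⟩ := ih hPN
      exact ⟨k, hk.trans N.lt_succ_self, hPk, hPk'⟩

theorem Filter.Eventually.forall_of_forall_lt {α : Type*} {l : Filter α} {P : ℕ → α → Prop}
    {M : ℕ} (htail : ∀ᶠ x in l, ∀ n ≥ M, P n x) (hinit : ∀ n < M, ∀ᶠ x in l, P n x) :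
    ∀ᶠ x in l, ∀ n, P n x := by
  filter_upwards [htail, (eventually_all_finite (Set.finite_lt_nat M)).2 hinit] with x hge hlt n
  exact (lt_or_ge n M).elim (hlt n) (hge n)

namespace PartitionSeq

variable {T : ℝ} (π : PartitionSeq T) {n : ℕ}

theorem strictMonoOn_t (n : ℕ) : StrictMonoOn (π.t n) (Iic (π.N n)) :=
  strictMonoOn_Iic_of_lt_succ (π.mono n)

theorem exists_mem_Ico (n : ℕ) {u : ℝ} (hu₀ : 0 ≤ u) (huT : u < T) :
    ∃ k < π.N n, u ∈ Ico (π.t n k) (π.t n (k + 1)) := by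
  obtain ⟨k, hk, hle, hlt⟩ := Nat.exists_lt_and_not_succ (P := fun k => π.t n k ≤ u) (N := π.N n)
    (by simpa [π.first] using hu₀) (by simpa [π.last] using huT)
  exact ⟨k, hk, hle, not_le.1 hlt⟩

theorem exists_mem_Ioc (n : ℕ) {u : ℝ} (hu₀ : 0 < u) (huT : u ≤ T) :
    ∃ k < π.N n, u ∈ Ioc (π.t n k) (π.t n (k + 1)) := by
  obtain ⟨k, hk, hlt, hle⟩ := Nat.exists_lt_and_not_succ (P := fun k => π.t n k < u) (N := π.N n)
    (by simpa [π.first] using hu₀) (by simpa [π.last] using huT)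
  exact ⟨k, hk, hlt, not_lt.1 hle⟩

theorem exists_t_eq_of_le {m k : ℕ} (hk : k ≤ π.N m) (hmn : m ≤ n) :
    ∃ l ≤ π.N n, π.t n l = π.t m k := by
  induction n, hmn using Nat.le_induction with
  | base => exact ⟨k, hk, rfl⟩
  | succ n _ ih =>
    obtain ⟨l, hl, hlk⟩ := ih
    obtain ⟨l', hl', hl'l⟩ := π.nested n l hl
    exact ⟨l', hl', hl'l.trans hlk⟩

variable {E : Type*} [NormedAddCommGroup E] (F : ℝ → E)

theorem disc_eq_of_mem_Ico {k : ℕ} (hk : k < π.N n) {u : ℝ}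
    (hu : u ∈ Ico (π.t n k) (π.t n (k + 1))) : π.disc F n u = F (π.t n k) := by
  have hmono := π.strictMonoOn_t n
  have huT : u ≠ T := by
    refine (hu.2.trans_le ?_).ne
    simpa [π.last] using hmono.monotoneOn (mem_Iic.2 hk) (mem_Iic.2 le_rfl) hk
  rw [disc, indicator_of_notMem (by simpa using huT), zero_add,
    Finset.sum_eq_single_of_mem k (Finset.mem_range.2 hk), indicator_of_mem hu]
  intro j hj hjk
  refine indicator_of_notMem (fun hju => ?_) _
  have hj' : j < π.N n := Finset.mem_range.1 hj
  rcases hjk.lt_or_gt with hjk | hjk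
  · exact (hu.1.trans_lt hju.2).not_ge
      (hmono.monotoneOn (mem_Iic.2 hj') (mem_Iic.2 hk.le) hjk)
  · exact (hju.1.trans_lt hu.2).not_ge
      (hmono.monotoneOn (mem_Iic.2 hk) (mem_Iic.2 hj'.le) hjk)

theorem disc_apply_t {k : ℕ} (hk : k < π.N n) : π.disc F n (π.t n k) = F (π.t n k) :=
  π.disc_eq_of_mem_Ico F hk ⟨le_rfl, π.mono n k hk⟩

theorem disc_eventuallyEq_nhdsLT {k : ℕ} (hk : k < π.N n) {t : ℝ}
    (ht : t ∈ Ioc (π.t n k) (π.t n (k + 1))) :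
    π.disc F n =ᶠ[𝓝[<] t] fun _ => F (π.t n k) := by
  filter_upwards [Ico_mem_nhdsLT ht.1] with s hs
  exact π.disc_eq_of_mem_Ico F hk ⟨hs.1, hs.2.trans_le ht.2⟩

theorem leftLim_disc {k : ℕ} (hk : k < π.N n) {t : ℝ}
    (ht : t ∈ Ioc (π.t n k) (π.t n (k + 1))) :
    Function.leftLim (π.disc F n) t = F (π.t n k) :=
  leftLim_eq_of_tendsto (tendsto_const_nhds.congr' (π.disc_eventuallyEq_nhdsLT F hk ht).symm)

theorem eventually_disc_eq_leftLim {t : ℝ} (ht : t ∈ Ioc 0 T) :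
    ∀ᶠ s in 𝓝[<] t, π.disc F n s = Function.leftLim (π.disc F n) t := by
  obtain ⟨k, hk, htk⟩ := π.exists_mem_Ioc n ht.1 ht.2
  rw [π.leftLim_disc F hk htk]
  exact π.disc_eventuallyEq_nhdsLT F hk htk

theorem eventually_disc_eq_nhdsGT {t : ℝ} (ht : t ∈ Ico 0 T) :
    ∀ᶠ s in 𝓝[>] t, π.disc F n s = π.disc F n t := by
  obtain ⟨k, hk, htk⟩ := π.exists_mem_Ico n ht.1 ht.2
  filter_upwards [Ioo_mem_nhdsGT htk.2] with s hs
  rw [π.disc_eq_of_mem_Ico F hk htk, π.disc_eq_of_mem_Ico F hk ⟨htk.1.trans hs.1.le, hs.2⟩]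

theorem eventually_disc_apply_eq_of_mem_points {t : ℝ} (hp : t ∈ π.points) (htT : t < T) :
    ∀ᶠ m in atTop, π.disc F m t = F t := by
  obtain ⟨n, k, hk, rfl⟩ := hp
  filter_upwards [eventually_ge_atTop n] with m hm
  obtain ⟨l, hl, hlk⟩ := π.exists_t_eq_of_le hk hm
  have hlN : l < π.N m := hl.lt_of_ne (by rintro rfl; rw [π.last] at hlk; exact htT.ne' hlk)
  rw [← hlk, π.disc_apply_t F hlN]

theorem tendsto_disc_apply_of_continuousWithinAt {t : ℝ} (ht : t ∈ Ico 0 T)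
    (hF : ContinuousWithinAt F (Iic t) t) :
    Tendsto (fun m => π.disc F m t) atTop (𝓝 (F t)) := by
  refine Metric.tendsto_atTop.2 fun ε hε => ?_
  obtain ⟨δ, hδ, hFδ⟩ := Metric.continuousWithinAt_iff.1 hF ε hε
  obtain ⟨M, hM⟩ := π.mesh δ hδ
  refine ⟨M, fun m hm => ?_⟩
  obtain ⟨k, hk, htk⟩ := π.exists_mem_Ico m ht.1 ht.2
  rw [π.disc_eq_of_mem_Ico F hk htk]
  refine hFδ htk.1 ?_
  rw [Real.dist_eq, abs_of_nonpos (by linarith [htk.1])]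
  linarith [hM m hm k hk, htk.2]

theorem tendsto_disc_apply (hF : CadlagOn F 0 T) (hJ : jumpSet F T ⊆ π.points) {t : ℝ}
    (ht : t ∈ Ico 0 T) : Tendsto (fun m => π.disc F m t) atTop (𝓝 (F t)) := by
  by_cases hp : t ∈ π.points
  · exact tendsto_nhds_of_eventually_eq (π.eventually_disc_apply_eq_of_mem_points F hp ht.2)
  have ht₀ : 0 < t := ht.1.lt_of_ne fun h => hp ⟨0, 0, Nat.zero_le _, (π.first 0).trans h⟩
  have htT : t ∈ Ioc 0 T := ⟨ht₀, ht.2.le⟩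
  obtain ⟨L, hL⟩ := hF.2 t htT
  have hLt : L = F t := by
    by_contra hne
    exact hp (hJ ⟨htT, (leftLim_eq_of_tendsto hL).symm ▸ hne⟩)
  subst hLt
  exact π.tendsto_disc_apply_of_continuousWithinAt F ht (continuousWithinAt_Iio_iff_Iic.1 hL)

theorem eventually_norm_disc_sub_leftLim_lt {L : E} {t ε : ℝ} (ht : t ∈ Ioc 0 T)
    (hL : Tendsto F (𝓝[<] t) (𝓝 L)) (hε : 0 < ε) :
    ∀ᶠ s in 𝓝[<] t, ∀ n, ‖π.disc F n s - Function.leftLim (π.disc F n) t‖ < ε := by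
  obtain ⟨δ, hδ, hFδ⟩ := Metric.tendsto_nhdsWithin_nhds.1 hL (ε / 2) (half_pos hε)
  obtain ⟨M, hM⟩ := π.mesh (δ / 2) (half_pos hδ)
  have hnear : ∀ x, x < t → t - δ < x → dist (F x) L < ε / 2 := fun x hxt hxδ =>
    hFδ hxt (by rw [Real.dist_eq, abs_of_neg (by linarith)]; linarith)
  refine Filter.Eventually.forall_of_forall_lt (M := M) ?_ fun n _ => ?_
  · have hwin : max 0 (t - δ / 2) < t := max_lt ht.1 (by linarith)
    filter_upwards [Ioo_mem_nhdsLT hwin] with s hs n hn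
    obtain ⟨k, hk, hsk⟩ :=
      π.exists_mem_Ico n ((le_max_left _ _).trans hs.1.le) (hs.2.trans_le ht.2)
    obtain ⟨j, hj, htj⟩ := π.exists_mem_Ioc n ht.1 ht.2
    have hδs : t - δ / 2 < s := (le_max_right _ _).trans_lt hs.1
    have hk_near : t - δ < π.t n k := by linarith [hM n hn k hk, hsk.2]
    have hj_near : t - δ < π.t n j := by linarith [hM n hn j hj, htj.2]
    rw [π.disc_eq_of_mem_Ico F hk hsk, π.leftLim_disc F hj htj, ← dist_eq_norm]
    calc _ ≤ dist (F (π.t n k)) L + dist (F (π.t n j)) L := dist_triangle_right _ _ _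
      _ < ε / 2 + ε / 2 :=
        add_lt_add (hnear _ (hsk.1.trans_lt hs.2) hk_near) (hnear _ htj.1 hj_near)
      _ = ε := add_halves ε
  · filter_upwards [π.eventually_disc_eq_leftLim F ht] with s hs
    rwa [hs, sub_self, norm_zero]

theorem eventually_norm_disc_sub_lt_nhdsGT {t ε : ℝ} (ht : t ∈ Ico 0 T)
    (hright : Tendsto F (𝓝[>] t) (𝓝 (F t)))
    (hconv : Tendsto (fun m => π.disc F m t) atTop (𝓝 (F t))) (hε : 0 < ε) :
    ∀ᶠ s in 𝓝[>] t, ∀ n, ‖π.disc F n s - π.disc F n t‖ < ε := by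
  obtain ⟨δ, hδ, hFδ⟩ := Metric.tendsto_nhdsWithin_nhds.1 hright (ε / 2) (half_pos hε)
  obtain ⟨M, hM⟩ := Metric.tendsto_atTop.1 hconv (ε / 2) (half_pos hε)
  refine Filter.Eventually.forall_of_forall_lt (M := M) ?_ fun n _ => ?_
  · have hwin : t < min T (t + δ) := lt_min ht.2 (by linarith)
    filter_upwards [Ioo_mem_nhdsGT hwin] with s hs n hn
    obtain ⟨k, hk, hsk⟩ :=
      π.exists_mem_Ico n (ht.1.trans hs.1.le) (hs.2.trans_le (min_le_left _ _))
    rw [π.disc_eq_of_mem_Ico F hk hsk]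
    rcases le_or_gt (π.t n k) t with hkt | hkt
    · rwa [π.disc_eq_of_mem_Ico F hk ⟨hkt, hs.1.trans hsk.2⟩, sub_self, norm_zero]
    have hk_near : dist (π.t n k) t < δ := by
      rw [Real.dist_eq, abs_of_pos (sub_pos.2 hkt)]
      linarith [hsk.1, hs.2.trans_le (min_le_right _ _)]
    rw [← dist_eq_norm]
    calc _ ≤ dist (F (π.t n k)) (F t) + dist (π.disc F n t) (F t) := dist_triangle_right _ _ _
      _ < ε / 2 + ε / 2 := add_lt_add (hFδ hkt hk_near) (hM n hn)
      _ = ε := add_halves ε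
  · filter_upwards [π.eventually_disc_eq_nhdsGT F ht] with s hs
    rwa [hs, sub_self, norm_zero]

end PartitionSeq

theorem discretizations_equiregulated_general
    (d : ℕ) (T : ℝ) (π : PartitionSeq T) (F : ℝ → Vec d)
    (hF : CadlagOn F 0 T) (hJ : jumpSet F T ⊆ π.points) :
    (∀ t ∈ Ioc (0 : ℝ) T, ∀ ε > (0 : ℝ), ∃ u ∈ Ico (0 : ℝ) t,
        ∀ s ∈ Ico u t, ∀ n : ℕ,
          ‖π.disc F n s - Function.leftLim (π.disc F n) t‖ < ε) ∧
    (∀ t ∈ Ico (0 : ℝ) T, ∀ ε > (0 : ℝ), ∃ v ∈ Ioc t T,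
        ∀ s ∈ Ioc t v, ∀ n : ℕ,
          ‖π.disc F n s - π.disc F n t‖ < ε) := by
  refine ⟨fun t ht ε hε => ?_, fun t ht ε hε => ?_⟩
  · obtain ⟨L, hL⟩ := hF.2 t ht
    obtain ⟨u, hu, hsub⟩ := mem_nhdsLT_iff_exists_Ico_subset.1
      (π.eventually_norm_disc_sub_leftLim_lt F ht hL hε)
    exact ⟨max u 0, ⟨le_max_right _ _, max_lt hu ht.1⟩,
      fun s hs => hsub ⟨(le_max_left _ _).trans hs.1, hs.2⟩⟩
  · obtain ⟨v, hv, hsub⟩ := mem_nhdsGT_iff_exists_Ioc_subset.1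
      (π.eventually_norm_disc_sub_lt_nhdsGT F ht (hF.1 t ht) (π.tendsto_disc_apply F hF hJ ht) hε)
    exact ⟨min v T, ⟨lt_min hv ht.2, min_le_right _ _⟩,
      fun s hs => hsub ⟨hs.1, hs.2.trans (min_le_left _ _)⟩⟩

/-- **Equiregularity of the discretizations** (Steps 1–3 of the proof of Proposition 2.?).
If the jump times of the càdlàg path `F` are contained in `∪_n P^n`, then the family
`{F^n : n ∈ ℕ}` of left-point discretizations is equiregulated. -/
theorem discretizations_equiregulated
    (d : ℕ) (T : ℝ) (hT : 0 < T) (π : PartitionSeq T) (F : ℝ → Vec d)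
    (hF : CadlagOn F 0 T) (hJ : jumpSet F T ⊆ π.points) :
    (∀ t ∈ Ioc (0 : ℝ) T, ∀ ε > (0 : ℝ), ∃ u ∈ Ico (0 : ℝ) t,
        ∀ s ∈ Ico u t, ∀ n : ℕ,
          ‖π.disc F n s - Function.leftLim (π.disc F n) t‖ < ε) ∧
    (∀ t ∈ Ico (0 : ℝ) T, ∀ ε > (0 : ℝ), ∃ v ∈ Ioc t T,
        ∀ s ∈ Ioc t v, ∀ n : ℕ,
          ‖π.disc F n s - π.disc F n t‖ < ε) :=
  discretizations_equiregulated_general d T π F hF hJ
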